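/- arXiv:2312.07097 — 4 statements merged into one kernel-verified Lean document; each statement's English description precedes it below -/
import Mathlib

section
/- Let φ ∈ C²(Ω) be a positive superharmonic function on an open set Ω ⊂ ℝᵈ (i.e. Δφ ≤ 0 on Ω) and let η ∈ C²(Ω). Then pointwise on Ω one has Δ(η²/φ)·Δφ ≤ (Δη)². -/
/-!
Along each coordinate direction the quotient rule gives
Δ(η²/φ) = 2ηΔη/φ - η²Δφ/φ² + (2/φ)|∇η - (η/φ)∇φ|².
Multiplied by Δφ ≤ 0, the gradient term only decreases, and the rest equals
(2ηΔη/φ - η²Δφ/φ²)Δφ = (Δη)² - (Δη - ηΔφ/φ)² ≤ (Δη)².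
-/

noncomputable def lap {d : ℕ} (f : EuclideanSpace ℝ (Fin d) → ℝ)
    (x : EuclideanSpace ℝ (Fin d)) : ℝ :=
  ∑ i : Fin d, fderiv ℝ (fun y => fderiv ℝ f y (EuclideanSpace.single i 1)) x
    (EuclideanSpace.single i 1)

open Filter Topology

section SecondDirectionalDeriv

variable {E : Type*} [NormedAddCommGroup E] [NormedSpace ℝ E] {f g : E → ℝ} {x : E}

theorem fderiv_sq_div_apply (hf : DifferentiableAt ℝ f x) (hg : DifferentiableAt ℝ g x)
    (hgx : g x ≠ 0) (v : E) :
    fderiv ℝ (fun y => f y ^ 2 / g y) x v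
      = 2 * f x * fderiv ℝ f x v / g x - f x ^ 2 * fderiv ℝ g x v / g x ^ 2 := by
  have hinv : HasFDerivAt (fun y => (g y)⁻¹) (-(g x ^ 2)⁻¹ • fderiv ℝ g x) x :=
    (hasDerivAt_inv hgx).comp_hasFDerivAt x hg.hasFDerivAt
  simp_rw [div_eq_mul_inv]
  rw [((hf.hasFDerivAt.pow 2).fun_mul hinv).fderiv]
  simp only [add_apply, smul_apply, smul_eq_mul, nsmul_eq_mul, Nat.cast_ofNat, Nat.reduceSub,
    pow_one]
  field_simp
  ring

theorem ContDiffAt.hasFDerivAt_fderiv_apply (hf : ContDiffAt ℝ 2 f x) (v : E) :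
    HasFDerivAt (fun y => fderiv ℝ f y v) (fderiv ℝ (fun y => fderiv ℝ f y v) x) x :=
  (((hf.fderiv_right (m := 1) le_rfl).differentiableAt one_ne_zero).clm_apply
    (differentiableAt_const v)).hasFDerivAt

theorem fderiv_fderiv_sq_div_apply (hf : ContDiffAt ℝ 2 f x) (hg : ContDiffAt ℝ 2 g x)
    (hgx : g x ≠ 0) (v : E) :
    fderiv ℝ (fun y => fderiv ℝ (fun z => f z ^ 2 / g z) y v) x v
      = 2 * f x * fderiv ℝ (fun y => fderiv ℝ f y v) x v / g x
        - f x ^ 2 * fderiv ℝ (fun y => fderiv ℝ g y v) x v / g x ^ 2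
        + 2 / g x * (fderiv ℝ f x v - f x * fderiv ℝ g x v / g x) ^ 2 := by
  have hnear : (fun y => fderiv ℝ (fun z => f z ^ 2 / g z) y v) =ᶠ[𝓝 x]
      fun y => 2 * f y * fderiv ℝ f y v * (g y)⁻¹
        - f y ^ 2 * fderiv ℝ g y v * ((g y)⁻¹) ^ 2 := by
    filter_upwards [hf.eventually (by simp), hg.eventually (by simp),
      hg.continuousAt.eventually_ne hgx] with y hfy hgy hgy0
    rw [fderiv_sq_div_apply (hfy.differentiableAt two_ne_zero)
      (hgy.differentiableAt two_ne_zero) hgy0]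
    field_simp
  have hf' := (hf.differentiableAt two_ne_zero).hasFDerivAt
  have hinv : HasFDerivAt (fun y => (g y)⁻¹) (-(g x ^ 2)⁻¹ • fderiv ℝ g x) x :=
    (hasDerivAt_inv hgx).comp_hasFDerivAt x (hg.differentiableAt two_ne_zero).hasFDerivAt
  have hfirst :=
    (((hf'.const_mul 2).fun_mul (hf.hasFDerivAt_fderiv_apply v)).fun_mul hinv).fun_sub
      (((hf'.pow 2).fun_mul (hg.hasFDerivAt_fderiv_apply v)).fun_mul (hinv.pow 2))
  rw [hnear.fderiv_eq, hfirst.fderiv]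
  simp only [add_apply, sub_apply, smul_apply, smul_eq_mul, nsmul_eq_mul, Nat.cast_ofNat,
    Nat.reduceSub, pow_one]
  field_simp
  ring

end SecondDirectionalDeriv

theorem lap_sq_div {d : ℕ} {f g : EuclideanSpace ℝ (Fin d) → ℝ}
    {x : EuclideanSpace ℝ (Fin d)}
    (hf : ContDiffAt ℝ 2 f x) (hg : ContDiffAt ℝ 2 g x) (hgx : g x ≠ 0) :
    lap (fun y => f y ^ 2 / g y) x
      = 2 * f x * lap f x / g x - f x ^ 2 * lap g x / g x ^ 2
        + 2 / g x * ∑ i : Fin d, (fderiv ℝ f x (EuclideanSpace.single i 1)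
            - f x * fderiv ℝ g x (EuclideanSpace.single i 1) / g x) ^ 2 := by
  simp only [lap, fderiv_fderiv_sq_div_apply hf hg hgx, Finset.sum_add_distrib,
    Finset.sum_sub_distrib, Finset.mul_sum, Finset.sum_div]

theorem sq_div_expansion_mul_le_sq {p e L M S : ℝ} (hp : 0 < p) (hM : M ≤ 0) (hS : 0 ≤ S) :
    (2 * e * L / p - e ^ 2 * M / p ^ 2 + 2 / p * S) * M ≤ L ^ 2 := by
  have hsq : (2 * e * L / p - e ^ 2 * M / p ^ 2) * M = L ^ 2 - (L - e * M / p) ^ 2 := by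
    field_simp
    ring
  have hgrad : 2 / p * S * M ≤ 0 := mul_nonpos_of_nonneg_of_nonpos (by positivity) hM
  rw [add_mul, hsq]
  linarith [sq_nonneg (L - e * M / p)]

theorem stmt_0 {d : ℕ} (Ω : Set (EuclideanSpace ℝ (Fin d))) (hΩ : IsOpen Ω)
    (φ η : EuclideanSpace ℝ (Fin d) → ℝ)
    (hφ : ContDiffOn ℝ 2 φ Ω) (hη : ContDiffOn ℝ 2 η Ω)
    (hφpos : ∀ x ∈ Ω, 0 < φ x) (hsuper : ∀ x ∈ Ω, lap φ x ≤ 0) :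
    ∀ x ∈ Ω, lap (fun y => (η y) ^ 2 / φ y) x * lap φ x ≤ (lap η x) ^ 2 := by
  intro x hx
  have hxΩ : Ω ∈ 𝓝 x := hΩ.mem_nhds hx
  rw [lap_sq_div (hη.contDiffAt hxΩ) (hφ.contDiffAt hxΩ) (hφpos x hx).ne']
  exact sq_div_expansion_mul_le_sq (hφpos x hx) (hsuper x hx)
    (Finset.sum_nonneg fun i _ => sq_nonneg _)
end

section
/- Let d ≥ 3, p ≥ q ≥ 1 with pq > 1, α = 2(p+1)/(pq−1), β = 2(q+1)/(pq−1), λ = α(d−2−α), μ = β(d−2−β). If d − 4 > α + β and 0 < β ≤ α < d−2, then letting A = √(pq)·4q/(q+1)² and B = √(pq)·4p/(p+1)², one has A·μ ≤ B·λ. -/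
theorem stmt_7 (d : ℕ) (hd : 3 ≤ d) (p q : ℝ) (hq : 1 ≤ q) (hpq : q ≤ p) (hpq1 : 1 < p * q)
    (α β lam mu A B : ℝ)
    (hα : α = 2 * (p + 1) / (p * q - 1)) (hβ : β = 2 * (q + 1) / (p * q - 1))
    (hlam : lam = α * ((d : ℝ) - 2 - α)) (hmu : mu = β * ((d : ℝ) - 2 - β))
    (hd4 : α + β < (d : ℝ) - 4) (hβ0 : 0 < β) (hβα : β ≤ α) (hαd : α < (d : ℝ) - 2)
    (hA : A = Real.sqrt (p * q) * (4 * q) / (q + 1) ^ 2)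
    (hB : B = Real.sqrt (p * q) * (4 * p) / (p + 1) ^ 2) :
    A * mu ≤ B * lam := by
  have h1 : (0:ℝ) < p * q - 1 := by linarith
  have hq0 : (0:ℝ) < q + 1 := by linarith
  have hp0 : (0:ℝ) < p + 1 := by linarith
  have hdd : 2 * (p + q + 2) < ((d:ℝ) - 4) * (p * q - 1) := by
    rw [hα, hβ, div_add_div _ _ (ne_of_gt h1) (ne_of_gt h1), div_lt_iff₀ (by positivity : (0:ℝ) < (p*q-1)*(p*q-1))] at hd4
    nlinarith [hd4, h1, mul_pos h1 h1]
  have hs : 0 ≤ Real.sqrt (p * q) := Real.sqrt_nonneg _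
  subst hA hB hlam hmu hα hβ
  have key : (4 * q) / (q + 1) ^ 2 *
        ((2 * (q + 1) / (p * q - 1)) * ((d:ℝ) - 2 - 2 * (q + 1) / (p * q - 1))) ≤
      (4 * p) / (p + 1) ^ 2 *
        ((2 * (p + 1) / (p * q - 1)) * ((d:ℝ) - 2 - 2 * (p + 1) / (p * q - 1))) := by
    rw [← sub_nonneg]
    have heq : (4 * p) / (p + 1) ^ 2 *
          ((2 * (p + 1) / (p * q - 1)) * ((d:ℝ) - 2 - 2 * (p + 1) / (p * q - 1))) -
        (4 * q) / (q + 1) ^ 2 *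
          ((2 * (q + 1) / (p * q - 1)) * ((d:ℝ) - 2 - 2 * (q + 1) / (p * q - 1))) =
        8 * (p - q) * (((d:ℝ) - 4) * (p * q - 1) - 2 * (p + q + 2)) /
          ((p + 1) * (q + 1) * (p * q - 1) ^ 2) := by
      field_simp
      ring
    rw [heq]
    apply div_nonneg
    · nlinarith
    · positivity
  have e1 : Real.sqrt (p * q) * (4 * q) / (q + 1) ^ 2 *
        ((2 * (q + 1) / (p * q - 1)) * ((d:ℝ) - 2 - 2 * (q + 1) / (p * q - 1))) =
      Real.sqrt (p * q) * ((4 * q) / (q + 1) ^ 2 *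
        ((2 * (q + 1) / (p * q - 1)) * ((d:ℝ) - 2 - 2 * (q + 1) / (p * q - 1)))) := by ring
  have e2 : Real.sqrt (p * q) * (4 * p) / (p + 1) ^ 2 *
        ((2 * (p + 1) / (p * q - 1)) * ((d:ℝ) - 2 - 2 * (p + 1) / (p * q - 1))) =
      Real.sqrt (p * q) * ((4 * p) / (p + 1) ^ 2 *
        ((2 * (p + 1) / (p * q - 1)) * ((d:ℝ) - 2 - 2 * (p + 1) / (p * q - 1)))) := by ring
  rw [e1, e2]
  exact mul_le_mul_of_nonneg_left key hs
end

section
/- Let d ≥ 3, γ = α − β with α = 2(p+1)/(pq−1), β = 2(q+1)/(pq−1), H = ((d−2)² − γ²)/4, λ = α(d−2−α), μ = β(d−2−β), where p ≥ q ≥ 1, pq > 1, 0 < β ≤ α < d−2. If H² < pq·λ·μ and d − 4 > α + β, then H < √(pq)·A·μ, where A = √(pq)·4q/(q+1)². -/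
theorem stmt_8 (d : ℕ) (hd : 3 ≤ d) (p q : ℝ) (hq : 1 ≤ q) (hpq : q ≤ p) (hpq1 : 1 < p * q)
    (α β γ H lam mu A : ℝ)
    (hα : α = 2 * (p + 1) / (p * q - 1)) (hβ : β = 2 * (q + 1) / (p * q - 1))
    (hγ : γ = α - β) (hH : H = (((d : ℝ) - 2) ^ 2 - γ ^ 2) / 4)
    (hlam : lam = α * ((d : ℝ) - 2 - α)) (hmu : mu = β * ((d : ℝ) - 2 - β))
    (hβ0 : 0 < β) (hβα : β ≤ α) (hαd : α < (d : ℝ) - 2)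
    (hJL : H ^ 2 < p * q * lam * mu) (hd4 : α + β < (d : ℝ) - 4)
    (hA : A = Real.sqrt (p * q) * (4 * q) / (q + 1) ^ 2) :
    H < Real.sqrt (p * q) * A * mu := by
  have hq0 : (0:ℝ) < q := lt_of_lt_of_le one_pos hq
  have hp1 : (1:ℝ) ≤ p := le_trans hq hpq
  have hpq0 : (0:ℝ) < p * q := lt_trans one_pos hpq1
  have hpq1' : (0:ℝ) < p * q - 1 := by linarith
  have hα0 : 0 < α := lt_of_lt_of_le hβ0 hβα
  have hβd : β < (d:ℝ) - 2 := lt_of_le_of_lt hβα hαd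
  have hmu0 : 0 < mu := by
    rw [hmu]; have : 0 < (d:ℝ) - 2 - β := by linarith
    positivity
  have hlam0 : 0 < lam := by
    rw [hlam]; have : 0 < (d:ℝ) - 2 - α := by linarith
    positivity
  have hH0 : 0 ≤ H := by
    have hγ0 : 0 ≤ γ := by rw [hγ]; linarith
    have hγd : γ < (d:ℝ) - 2 := by rw [hγ]; linarith
    rw [hH]; nlinarith
  have hsqpq : Real.sqrt (p * q) ^ 2 = p * q := Real.sq_sqrt hpq0.le
  have hsq0 : 0 ≤ Real.sqrt (p * q) := Real.sqrt_nonneg _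
  have hA0 : 0 ≤ A := by rw [hA]; positivity
  -- A^2 = p*q*16*q^2/(q+1)^4
  have hA2 : A ^ 2 = p * q * (16 * q ^ 2) / (q + 1) ^ 4 := by
    rw [hA, div_pow, mul_pow, hsqpq]; ring_nf
  -- key: α ≤ A^2 * β
  have hkey : α ≤ A ^ 2 * β := by
    rw [hα, hβ, hA2]
    rw [div_mul_div_comm,
      div_le_div_iff₀ hpq1' (by positivity : (0:ℝ) < (q+1)^4 * (p*q-1))]
    have h16 : (p + 1) * (q + 1) ^ 3 ≤ 16 * p * q ^ 3 := by
      nlinarith [sq_nonneg (q - 1), sq_nonneg (p - q), mul_pos hq0 hq0]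
    have h := mul_le_mul_of_nonneg_right h16
      (show (0:ℝ) ≤ 2 * (q + 1) * (p * q - 1) by positivity)
    linarith [h]
  have hlm : lam ≤ A ^ 2 * mu := by
    have h1 : lam * β ≤ α * mu := by
      rw [hlam, hmu]
      have := mul_le_mul_of_nonneg_left hβα (mul_nonneg hα0.le hβ0.le)
      linarith [this]
    have h2 : α * mu ≤ A ^ 2 * mu * β := by
      have := mul_le_mul_of_nonneg_right hkey hmu0.le
      linarith [this]
    exact le_of_mul_le_mul_right (le_trans h1 h2) hβ0
  have hsl : Real.sqrt lam ≤ A * Real.sqrt mu := by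
    have := Real.sqrt_le_sqrt hlm
    rwa [Real.sqrt_mul (by positivity) mu, Real.sqrt_sq hA0] at this
  have hHlt : H < Real.sqrt (p * q * lam * mu) := by
    rw [show p * q * lam * mu = p * q * (lam * mu) by ring] at hJL ⊢
    exact (Real.lt_sqrt hH0).mpr hJL
  have hsplit : Real.sqrt (p * q * (lam * mu)) = Real.sqrt (p * q) * (Real.sqrt lam * Real.sqrt mu) := by
    rw [Real.sqrt_mul hpq0.le, Real.sqrt_mul hlam0.le]
  calc H < Real.sqrt (p * q * lam * mu) := hHlt
    _ = Real.sqrt (p * q) * (Real.sqrt lam * Real.sqrt mu) := by rw [show p * q * lam * mu = p * q * (lam * mu) by ring, hsplit]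
    _ ≤ Real.sqrt (p * q) * (A * Real.sqrt mu * Real.sqrt mu) := by
        apply mul_le_mul_of_nonneg_left _ hsq0
        exact mul_le_mul_of_nonneg_right hsl (Real.sqrt_nonneg _)
    _ = Real.sqrt (p * q) * A * (Real.sqrt mu * Real.sqrt mu) := by ring
    _ = Real.sqrt (p * q) * A * mu := by rw [Real.mul_self_sqrt hmu0.le]
end

section
/- Let d ≥ 3 and h ∈ C¹_c(0, ∞). Then ∫₀^∞ (h'(r))² r^{d−1} dr ≥ ((d−2)/2)² ∫₀^∞ h(r)² r^{d−3} dr (Hardy's inequality in radial form). -/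
open MeasureTheory Set

/-! With `c = (d - 2) / 2`, expanding the square in
`0 ≤ ∫ (h' + c h / r)² r^(d-1) = ∫ h'² r^(d-1) + 2c ∫ h h' r^(d-2) + c² ∫ h² r^(d-3)`
and integrating the middle term by parts, `2 ∫ h h' r^(d-2) = -(d-2) ∫ h² r^(d-3)`, leaves
`0 ≤ ∫ h'² r^(d-1) - c² ∫ h² r^(d-3)`. -/

lemma IsCompact.exists_subset_Ioo_of_subset_Ioi {K : Set ℝ} {c : ℝ} (hK : IsCompact K)
    (hKc : K ⊆ Ioi c) : ∃ a b, c < a ∧ a ≤ b ∧ K ⊆ Ioo a b := by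
  rcases K.eq_empty_or_nonempty with rfl | hne
  · exact ⟨c + 1, c + 1, by linarith, le_rfl, empty_subset _⟩
  obtain ⟨m, hmK, hm⟩ := hK.exists_isLeast hne
  obtain ⟨M, hM⟩ := hK.bddAbove
  have hcm : c < m := hKc hmK
  refine ⟨(c + m) / 2, M + 1, by linarith, by linarith [hM hmK], fun x hx => ⟨?_, ?_⟩⟩
  · linarith [hm hx]
  · linarith [hM hx]

lemma setIntegral_Ioi_eq_intervalIntegral {E : Type*} [NormedAddCommGroup E] [NormedSpace ℝ E]
    {f : ℝ → E} {c a b : ℝ} (hca : c ≤ a) (hab : a ≤ b) (hf : ∀ x ∉ Ioc a b, f x = 0) :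
    ∫ x in Ioi c, f x = ∫ x in a..b, f x := by
  rw [intervalIntegral.integral_of_le hab]
  exact setIntegral_eq_of_subset_of_forall_sdiff_eq_zero measurableSet_Ioi
    (fun x hx => hca.trans_lt hx.1) fun x hx => hf x hx.2

lemma continuousOn_rpow_const_uIcc {a b : ℝ} (ha : 0 < a) (hb : 0 < b) (p : ℝ) :
    ContinuousOn (fun r : ℝ => r ^ p) (uIcc a b) :=
  continuousOn_id.rpow_const fun _ hx => Or.inl (lt_min ha hb |>.trans_le hx.1).ne'

lemma integral_mul_deriv_mul_rpow {h : ℝ → ℝ} {a b : ℝ} (p : ℝ) (ha : 0 < a) (hb : 0 < b)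
    (hreg : ContDiff ℝ 1 h) (hha : h a = 0) (hhb : h b = 0) :
    ∫ r in a..b, h r * deriv h r * r ^ p = -(p / 2) * ∫ r in a..b, h r ^ 2 * r ^ (p - 1) := by
  have hpos : ∀ x ∈ uIcc a b, 0 < x := fun x hx => lt_min ha hb |>.trans_le hx.1
  have hh2 : ∀ x ∈ uIcc a b, HasDerivAt (fun r => h r ^ 2) (2 * (h x * deriv h x)) x :=
    fun x _ => by simpa [mul_assoc] using ((hreg.differentiable one_ne_zero) x).hasDerivAt.fun_pow 2
  have hpow : ∀ x ∈ uIcc a b, HasDerivAt (fun r : ℝ => r ^ p) (p * x ^ (p - 1)) x :=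
    fun x hx => Real.hasDerivAt_rpow_const (Or.inl (hpos x hx).ne')
  have hcont : Continuous fun r => h r * deriv h r :=
    hreg.continuous.mul (hreg.continuous_deriv le_rfl)
  have hparts := intervalIntegral.integral_mul_deriv_eq_deriv_mul hh2 hpow
    (hcont.continuousOn.intervalIntegrable.const_mul 2)
    (((continuousOn_rpow_const_uIcc ha hb _).const_smul p).intervalIntegrable)
  simp only [hha, hhb, mul_assoc (2 : ℝ), mul_left_comm _ p, intervalIntegral.integral_const_mul]
    at hparts
  linear_combination hparts / 2

lemma sq_add_mul_div_mul_rpow {r : ℝ} (hr : 0 < r) (x y c d : ℝ) :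
    (y + c * x / r) ^ 2 * r ^ (d - 1)
      = y ^ 2 * r ^ (d - 1) + 2 * c * (x * y * r ^ (d - 2)) + c ^ 2 * (x ^ 2 * r ^ (d - 3)) := by
  have h1 : r ^ (d - 1) = r ^ (d - 2) * r := by
    rw [show d - 1 = d - 2 + 1 by ring, Real.rpow_add_one hr.ne']
  have h2 : r ^ (d - 2) = r ^ (d - 3) * r := by
    rw [show d - 2 = d - 3 + 1 by ring, Real.rpow_add_one hr.ne']
  rw [h1, h2]
  field_simp
  ring

theorem intervalIntegral_hardy {h : ℝ → ℝ} {a b : ℝ} (d : ℝ) (ha : 0 < a) (hab : a ≤ b)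
    (hreg : ContDiff ℝ 1 h) (hha : h a = 0) (hhb : h b = 0) :
    ((d - 2) / 2) ^ 2 * ∫ r in a..b, h r ^ 2 * r ^ (d - 3)
      ≤ ∫ r in a..b, deriv h r ^ 2 * r ^ (d - 1) := by
  set c := (d - 2) / 2
  have hb : 0 < b := ha.trans_le hab
  have hcont := hreg.continuous
  have hcont' := hreg.continuous_deriv le_rfl
  have hF1 : IntervalIntegrable (fun r => deriv h r ^ 2 * r ^ (d - 1)) volume a b :=
    ((hcont'.pow 2).continuousOn.mul (continuousOn_rpow_const_uIcc ha hb _)).intervalIntegrable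
  have hF2 : IntervalIntegrable (fun r => h r ^ 2 * r ^ (d - 3)) volume a b :=
    ((hcont.pow 2).continuousOn.mul (continuousOn_rpow_const_uIcc ha hb _)).intervalIntegrable
  have hG : IntervalIntegrable (fun r => h r * deriv h r * r ^ (d - 2)) volume a b :=
    ((hcont.mul hcont').continuousOn.mul (continuousOn_rpow_const_uIcc ha hb _)).intervalIntegrable
  have hparts := integral_mul_deriv_mul_rpow (d - 2) ha hb hreg hha hhb
  rw [show d - 2 - 1 = d - 3 by ring] at hparts
  have hsquare : 0 ≤ ∫ r in a..b, (deriv h r + c * h r / r) ^ 2 * r ^ (d - 1) :=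
    intervalIntegral.integral_nonneg hab fun r hr =>
      mul_nonneg (sq_nonneg _) (Real.rpow_nonneg (ha.trans_le hr.1).le _)
  have hexpand : ∫ r in a..b, (deriv h r + c * h r / r) ^ 2 * r ^ (d - 1)
      = (∫ r in a..b, deriv h r ^ 2 * r ^ (d - 1))
        + 2 * c * (∫ r in a..b, h r * deriv h r * r ^ (d - 2))
        + c ^ 2 * ∫ r in a..b, h r ^ 2 * r ^ (d - 3) := by
    rw [intervalIntegral.integral_congr fun r hr =>
        sq_add_mul_div_mul_rpow (lt_min ha hb |>.trans_le hr.1) (h r) (deriv h r) c d,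
      intervalIntegral.integral_add (hF1.add (hG.const_mul _)) (hF2.const_mul _),
      intervalIntegral.integral_add hF1 (hG.const_mul _),
      intervalIntegral.integral_const_mul, intervalIntegral.integral_const_mul]
  rw [hexpand, hparts] at hsquare
  linear_combination hsquare

theorem stmt_9_general (d : ℕ) (h : ℝ → ℝ)
    (hreg : ContDiff ℝ 1 h) (hsupp : HasCompactSupport h)
    (hsupp' : tsupport h ⊆ Ioi (0 : ℝ)) :
    (((d : ℝ) - 2) / 2) ^ 2 * ∫ r in Ioi (0 : ℝ), (h r) ^ 2 * r ^ ((d : ℝ) - 3)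
      ≤ ∫ r in Ioi (0 : ℝ), (deriv h r) ^ 2 * r ^ ((d : ℝ) - 1) := by
  obtain ⟨a, b, ha, hab, hK⟩ := hsupp.isCompact.exists_subset_Ioo_of_subset_Ioi hsupp'
  have hzero : ∀ x ∉ Ioo a b, h x = 0 := fun x hx =>
    image_eq_zero_of_notMem_tsupport fun hxK => hx (hK hxK)
  have hzero' : ∀ x ∉ Ioo a b, deriv h x = 0 := fun x hx =>
    Function.notMem_support.mp fun hxs => hx (hK (support_deriv_subset hxs))
  have houtside : ∀ x ∉ Ioc a b, x ∉ Ioo a b := fun x hx hx' => hx (Ioo_subset_Ioc_self hx')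
  rw [setIntegral_Ioi_eq_intervalIntegral ha.le hab fun x hx => by simp [hzero x (houtside x hx)],
    setIntegral_Ioi_eq_intervalIntegral ha.le hab fun x hx => by simp [hzero' x (houtside x hx)]]
  exact intervalIntegral_hardy d ha hab hreg (hzero a fun hx => lt_irrefl a hx.1)
    (hzero b fun hx => lt_irrefl b hx.2)

theorem stmt_9 (d : ℕ) (hd : 3 ≤ d) (h : ℝ → ℝ)
    (hreg : ContDiff ℝ 1 h) (hsupp : HasCompactSupport h)
    (hsupp' : tsupport h ⊆ Ioi (0 : ℝ)) :
    (((d : ℝ) - 2) / 2) ^ 2 * ∫ r in Ioi (0 : ℝ), (h r) ^ 2 * r ^ ((d : ℝ) - 3)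
      ≤ ∫ r in Ioi (0 : ℝ), (deriv h r) ^ 2 * r ^ ((d : ℝ) - 1) :=
  stmt_9_general d h hreg hsupp hsupp'
end
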